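/- arXiv:2411.17816 — 2 statements merged into one kernel-verified Lean document; each statement's English description precedes it below -/
import Mathlib

section
/- Let H be an N×N Hermitian matrix over ℂ with spectral norm ‖H‖ ≤ 1, let β ≥ 0, and let à be an N×N matrix over ℂ satisfying ‖Ã − e^{−β/2}·exp(−βH/2)‖ ≤ ε′ for some 0 < ε′ ≤ 1. Then the actual success probability p̃ := Tr[Ã·Ã†]/N of the approximate quantum coin and the ideal success probability p := e^{−β}·Tr[exp(−βH)]/N satisfy |p̃ − p| ≤ 3ε′. -/
open scoped Matrix Matrix.Norms.L2Operator

/-!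
With `A = e^{-β/2} exp(-βH/2)`, hermiticity of `H` makes `A` Hermitian with
`A Aᴴ = e^{-β} exp(-βH)`, and `‖A‖ ≤ e^{-β/2} e^{β‖H‖/2} ≤ 1`. Writing
`Ã Ãᴴ - A Aᴴ = (Ã - A) Ãᴴ + A (Ã - A)ᴴ` gives `‖Ã Ãᴴ - A Aᴴ‖ ≤ ε′ (2 + ε′) ≤ 3ε′`, and the
normalized trace of a matrix is bounded by its spectral norm because every entry is.
-/

theorem NormedSpace.norm_exp_le_exp_norm {𝕂 𝔸 : Type*} [RCLike 𝕂] [NormedRing 𝔸]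
    [NormedAlgebra 𝕂 𝔸] [NormOneClass 𝔸] [CompleteSpace 𝔸] (x : 𝔸) :
    ‖NormedSpace.exp x‖ ≤ Real.exp ‖x‖ := by
  rw [NormedSpace.exp_eq_tsum 𝕂, Real.exp_eq_exp_ℝ, NormedSpace.exp_eq_tsum_div]
  refine tsum_of_norm_bounded (Real.summable_pow_div_factorial ‖x‖).hasSum fun n => ?_
  rw [norm_smul, norm_inv, RCLike.norm_natCast, inv_mul_eq_div]
  gcongr
  exact norm_pow_le x n

theorem norm_mul_star_sub_mul_star_le {R : Type*} [NormedRing R] [StarRing R] [NormedStarGroup R]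
    (a b : R) : ‖b * star b - a * star a‖ ≤ ‖b - a‖ * (‖b‖ + ‖a‖) := by
  have hsplit : b * star b - a * star a = (b - a) * star b + a * star (b - a) := by
    simp only [star_sub, sub_mul, mul_sub]; abel
  calc ‖b * star b - a * star a‖ ≤ ‖b - a‖ * ‖star b‖ + ‖a‖ * ‖star (b - a)‖ := by
        rw [hsplit]
        exact (norm_add_le _ _).trans (add_le_add (norm_mul_le _ _) (norm_mul_le _ _))
    _ = ‖b - a‖ * (‖b‖ + ‖a‖) := by rw [norm_star, norm_star]; ring

theorem norm_mul_star_sub_mul_star_le_three_mul {R : Type*} [NormedRing R] [StarRing R]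
    [NormedStarGroup R] {a b : R} {ε : ℝ} (ha : ‖a‖ ≤ 1) (hab : ‖b - a‖ ≤ ε) (hε : ε ≤ 1) :
    ‖b * star b - a * star a‖ ≤ 3 * ε := by
  have hb : ‖b‖ ≤ ‖a‖ + ε := by simpa using (norm_add_le (b - a) a).trans (by linarith)
  calc ‖b * star b - a * star a‖ ≤ ‖b - a‖ * (‖b‖ + ‖a‖) := norm_mul_star_sub_mul_star_le a b
    _ ≤ ε * (2 + 1) := by gcongr <;> linarith [norm_nonneg (b - a)]
    _ = 3 * ε := by ring

namespace Matrix

variable {𝕜 m n : Type*} [RCLike 𝕜] [Fintype m] [Fintype n] [DecidableEq n]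

theorem norm_entry_le_l2_opNorm (M : Matrix m n 𝕜) (i : m) (j : n) : ‖M i j‖ ≤ ‖M‖ := by
  have h := M.l2_opNorm_mulVec (PiLp.single 2 j (1 : 𝕜))
  rw [PiLp.norm_single, norm_one, mul_one] at h
  refine le_trans (le_of_eq ?_) ((PiLp.norm_apply_le _ i).trans h)
  simp

theorem norm_trace_div_card_le (M : Matrix n n 𝕜) :
    ‖M.trace / (Fintype.card n : 𝕜)‖ ≤ ‖M‖ := by
  rw [norm_div, RCLike.norm_natCast]
  refine div_le_of_le_mul₀ (Nat.cast_nonneg _) (norm_nonneg _) ?_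
  calc ‖M.trace‖ ≤ ∑ i, ‖M i i‖ := norm_sum_le _ _
    _ ≤ ∑ _i : n, ‖M‖ := Finset.sum_le_sum fun i _ => M.norm_entry_le_l2_opNorm i i
    _ = ‖M‖ * Fintype.card n := by
      rw [Finset.sum_const, Finset.card_univ, nsmul_eq_mul, mul_comm]

end Matrix

variable {n : Type*} [Fintype n] [DecidableEq n]

noncomputable def subnormalizedPropagator (β : ℝ) (H : Matrix n n ℂ) : Matrix n n ℂ :=
  Real.exp (-β / 2) • NormedSpace.exp ((-(β : ℂ) / 2) • H)

theorem isHermitian_subnormalizedPropagator {H : Matrix n n ℂ} (hH : H.IsHermitian) (β : ℝ) :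
    (subnormalizedPropagator β H).IsHermitian := by
  have hβ : IsSelfAdjoint (-(β : ℂ) / 2) := by simp [IsSelfAdjoint, Complex.conj_ofReal]
  exact (hH.smul hβ).exp.smul (IsSelfAdjoint.all _)

theorem subnormalizedPropagator_mul_self (β : ℝ) (H : Matrix n n ℂ) :
    subnormalizedPropagator β H * subnormalizedPropagator β H =
      (Real.exp (-β) : ℂ) • NormedSpace.exp ((-(β : ℂ)) • H) := by
  rw [subnormalizedPropagator, smul_mul_smul, ← Real.exp_add,
    ← Matrix.exp_add_of_commute _ _ (Commute.refl _), ← add_smul, add_halves, add_halves,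
    ← Complex.coe_smul]

theorem norm_subnormalizedPropagator_le_one {β : ℝ} (hβ : 0 ≤ β) {H : Matrix n n ℂ}
    (hH : ‖H‖ ≤ 1) : ‖subnormalizedPropagator β H‖ ≤ 1 := by
  -- `NormOneClass` needs `n` nonempty; over an empty index type every matrix is `0`.
  cases isEmpty_or_nonempty n
  · simp [Subsingleton.elim (subnormalizedPropagator β H) 0]
  have hexp : ‖NormedSpace.exp ((-(β : ℂ) / 2) • H)‖ ≤ Real.exp (β / 2) := by
    refine (NormedSpace.norm_exp_le_exp_norm (𝕂 := ℂ) _).trans (Real.exp_le_exp.mpr ?_)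
    rw [norm_smul, norm_div, norm_neg, Complex.norm_real, Real.norm_of_nonneg hβ,
      Complex.norm_two]
    exact mul_le_of_le_one_right (by positivity) hH
  calc ‖subnormalizedPropagator β H‖
      ≤ Real.exp (-β / 2) * Real.exp (β / 2) := by
        rw [subnormalizedPropagator, norm_smul, Real.norm_of_nonneg (Real.exp_nonneg _)]
        gcongr
    _ = 1 := by rw [← Real.exp_add, neg_div, neg_add_cancel, Real.exp_zero]

theorem approximate_coin_probability_bias_general
    {N : ℕ} (H : Matrix (Fin N) (Fin N) ℂ) (hH : H.IsHermitian)
    (hHnorm : ‖H‖ ≤ 1) (β : ℝ) (hβ : 0 ≤ β)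
    (Atil : Matrix (Fin N) (Fin N) ℂ) (ε' : ℝ) (hε'1 : ε' ≤ 1)
    (happrox : ‖Atil - Real.exp (-β / 2) • NormedSpace.exp ((-(β : ℂ) / 2) • H)‖ ≤ ε') :
    ‖(Atil * Atilᴴ).trace / (N : ℂ) -
        (Real.exp (-β) : ℂ) * (NormedSpace.exp ((-(β : ℂ)) • H)).trace / (N : ℂ)‖
      ≤ 3 * ε' := by
  set A := subnormalizedPropagator β H
  have hAA : A * Aᴴ = (Real.exp (-β) : ℂ) • NormedSpace.exp ((-(β : ℂ)) • H) := by
    rw [(isHermitian_subnormalizedPropagator hH β).eq, subnormalizedPropagator_mul_self]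
  have hdiff : ‖Atil * Atilᴴ - A * Aᴴ‖ ≤ 3 * ε' :=
    norm_mul_star_sub_mul_star_le_three_mul (norm_subnormalizedPropagator_le_one hβ hHnorm)
      happrox hε'1
  calc _ = ‖(Atil * Atilᴴ - A * Aᴴ).trace / (Fintype.card (Fin N) : ℂ)‖ := by
        rw [Matrix.trace_sub, hAA, Matrix.trace_smul, smul_eq_mul, sub_div, Fintype.card_fin]
    _ ≤ 3 * ε' := (Matrix.norm_trace_div_card_le _).trans hdiff

/-- If `Ã` approximates the sub-normalized propagator
`e^{−β/2}·exp(−βH/2)` to spectral-norm error `ε′ ∈ (0,1]`, and `‖H‖ ≤ 1`, then the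
actual success probability `p̃ = Tr[Ã Ã†]/N` is `3ε′`-close to the ideal success
probability `p = e^{−β} Tr[exp(−βH)]/N`. -/
theorem approximate_coin_probability_bias
    {N : ℕ} (hN : 0 < N) (H : Matrix (Fin N) (Fin N) ℂ) (hH : H.IsHermitian)
    (hHnorm : ‖H‖ ≤ 1) (β : ℝ) (hβ : 0 ≤ β)
    (Atil : Matrix (Fin N) (Fin N) ℂ) (ε' : ℝ) (hε'0 : 0 < ε') (hε'1 : ε' ≤ 1)
    (happrox : ‖Atil - Real.exp (-β / 2) • NormedSpace.exp ((-(β : ℂ) / 2) • H)‖ ≤ ε') :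
    ‖(Atil * Atilᴴ).trace / (N : ℂ) -
        (Real.exp (-β) : ℂ) * (NormedSpace.exp ((-(β : ℂ)) • H)).trace / (N : ℂ)‖
      ≤ 3 * ε' :=
  approximate_coin_probability_bias_general H hH hHnorm β hβ Atil ε' hε'1 happrox
end

section
/- Let p ∈ (0,1], let p̃, p̂ ∈ [0,1], let ε_r ∈ (0,1], let z > 0, and let S > 0 be a real number. Assume: (i) |p̃ − p| ≤ (ε_r/2)·p (the bias of the implemented coin probability is small); (ii) S ≥ 8 z² / (ε_r² p); and (iii) |p̂ − p̃| ≤ z·√(p̂(1−p̂)/S) (the Agresti–Coull confidence-interval coverage event holds). Then |p̂ − p| ≤ ε_r · p. Consequently, for Z := e^{β} N p and Ẑ := e^{β} N p̂ (with any N > 0 and β ≥ 0), the partition-function estimate satisfies |Ẑ − Z| ≤ ε_r · Z. -/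
/-- If the implemented coin probability `p̃` is `(ε_r/2)·p`-close to the
ideal probability `p ∈ (0,1]`, the number of tosses satisfies `S ≥ 8z²/(ε_r² p)`, and
the Agresti–Coull coverage event `|p̂ − p̃| ≤ z√(p̂(1−p̂)/S)` holds, then
`|p̂ − p| ≤ ε_r·p`; consequently the partition-function estimate `Ẑ = e^β N p̂`
satisfies `|Ẑ − Z| ≤ ε_r·Z` where `Z = e^β N p`. -/
theorem success_probability_estimation
    (p ptil phat εr z S : ℝ)
    (hp0 : 0 < p) (hp1 : p ≤ 1)
    (hptil0 : 0 ≤ ptil) (hptil1 : ptil ≤ 1)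
    (hphat0 : 0 ≤ phat) (hphat1 : phat ≤ 1)
    (hεr0 : 0 < εr) (hεr1 : εr ≤ 1) (hz : 0 < z) (hS : 0 < S)
    (hbias : |ptil - p| ≤ εr / 2 * p)
    (hSbound : S ≥ 8 * z ^ 2 / (εr ^ 2 * p))
    (hAC : |phat - ptil| ≤ z * Real.sqrt (phat * (1 - phat) / S)) :
    |phat - p| ≤ εr * p ∧
    ∀ N β : ℝ, 0 < N → 0 ≤ β →
      |Real.exp β * N * phat - Real.exp β * N * p| ≤ εr * (Real.exp β * N * p) := by
  set t := |phat - ptil| with ht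
  clear_value t
  have ht0 : 0 ≤ t := ht ▸ abs_nonneg _
  have hq0 : 0 ≤ phat * (1 - phat) / S :=
    div_nonneg (mul_nonneg hphat0 (by linarith)) hS.le
  -- square the AC bound
  have htsq : t ^ 2 ≤ z ^ 2 * (phat * (1 - phat) / S) := by
    have h1 : t ^ 2 ≤ (z * Real.sqrt (phat * (1 - phat) / S)) ^ 2 := by
      apply sq_le_sq' _ hAC
      nlinarith [mul_nonneg hz.le (Real.sqrt_nonneg (phat * (1 - phat) / S))]
    calc t ^ 2 ≤ (z * Real.sqrt (phat * (1 - phat) / S)) ^ 2 := h1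
      _ = z ^ 2 * (phat * (1 - phat) / S) := by
          rw [mul_pow, Real.sq_sqrt hq0]
  -- z^2 / S ≤ εr^2 * p / 8
  have hzS : z ^ 2 / S ≤ εr ^ 2 * p / 8 := by
    rw [div_le_div_iff₀ hS (by norm_num)]
    have hεp : 0 < εr ^ 2 * p := by positivity
    rw [ge_iff_le, div_le_iff₀ hεp] at hSbound
    nlinarith
  have htsq2 : t ^ 2 ≤ εr ^ 2 * p * phat / 8 := by
    have h2 : z ^ 2 * (phat * (1 - phat) / S) ≤ z ^ 2 / S * phat := by
      have hz2S : (0:ℝ) ≤ z ^ 2 / S := by positivity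
      have hle : phat * (1 - phat) ≤ phat := by nlinarith
      have heq : z ^ 2 * (phat * (1 - phat) / S) = z ^ 2 / S * (phat * (1 - phat)) := by ring
      rw [heq]
      exact mul_le_mul_of_nonneg_left hle hz2S
    calc t ^ 2 ≤ z ^ 2 * (phat * (1 - phat) / S) := htsq
      _ ≤ z ^ 2 / S * phat := h2
      _ ≤ εr ^ 2 * p / 8 * phat := by
          apply mul_le_mul_of_nonneg_right hzS hphat0
      _ = εr ^ 2 * p * phat / 8 := by ring
  -- phat ≤ 3/2 p + t
  have hphat_le : phat ≤ 3 / 2 * p + t := by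
    have h3 : phat - ptil ≤ t := ht ▸ le_abs_self _
    have h4 : ptil - p ≤ εr / 2 * p := (abs_le.mp hbias).2
    nlinarith
  -- t ≤ εr p / 2
  have hkey : t ≤ εr * p / 2 := by
    by_contra h
    push_neg at h
    have h2t : 0 < 2 * t - εr * p := by linarith
    have hu : 0 < εr * p := mul_pos hεr0 hp0
    have htpos : 0 < t := lt_of_le_of_lt (by positivity) h
    have h16 : 16 * t ^ 2 ≤ 3 * (εr * p) ^ 2 + 2 * (εr * p) * t := by
      have hc : εr ^ 2 * p * phat ≤ εr ^ 2 * p * (3 / 2 * p + t) :=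
        mul_le_mul_of_nonneg_left hphat_le (by positivity)
      have hd : εr ^ 2 * p * t ≤ εr * p * t := by
        nlinarith [mul_nonneg (mul_nonneg hεr0.le hp0.le) ht0]
      nlinarith
    have hA' := mul_lt_mul_of_pos_left h hu
    have hB' := mul_lt_mul_of_pos_left h (by linarith : (0:ℝ) < 8 * t)
    linarith [hA', hB']
  have hmain : |phat - p| ≤ εr * p := by
    have h5 : |phat - p| ≤ t + |ptil - p| := by
      have := abs_sub_le phat ptil p
      simpa [ht] using this
    linarith [h5, hkey, hbias]
  refine ⟨hmain, fun N β hN hβ => ?_⟩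
  have hE : 0 < Real.exp β := Real.exp_pos β
  have : Real.exp β * N * phat - Real.exp β * N * p = Real.exp β * N * (phat - p) := by ring
  rw [this, abs_mul, abs_of_pos (mul_pos hE hN)]
  calc Real.exp β * N * |phat - p| ≤ Real.exp β * N * (εr * p) :=
        mul_le_mul_of_nonneg_left hmain (mul_pos hE hN).le
    _ = εr * (Real.exp β * N * p) := by ring
end
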